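/- arXiv:math/9909187 — 6 statements merged into one kernel-verified Lean document; each statement's English description precedes it below -/
import Mathlib

section
/- Let 𝓗 be a family of nonempty connected subsets of ℝ^d, and fix H₀ ∈ 𝓗. Define D₀ = ⋃_{H ∈ 𝓗} H and, inductively, D_{j+1} = ⋃_{x ∈ D_j} convexHull ℝ (connected component of x in D_j). Define G₀ = H₀ and, inductively, G_{k+1} = convexHull ℝ (G_k ∪ ⋃ {H ∈ 𝓗 : H ∩ G_k ≠ ∅}). Then for every k ≥ 1 there exists a point x ∈ D_{k−1} such that G_k ⊆ convexHull ℝ (connected component of x in D_{k−1}). -/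
/-! Every hole meeting `G k` is connected, so `G k` together with those holes stays connected
and lies in a single component of `D k`; taking convex hulls puts `G (k + 1)` inside the
corresponding defect. That defect is convex, hence connected, and lies in `D (k + 1)`, which
contains all holes, so the same argument runs again at the next generation. -/

open Set

section Topology

variable {X : Type*} [TopologicalSpace X]

theorem IsPreconnected.union_sUnion_of_forall_inter_nonempty {C : Set X} {𝓗 : Set (Set X)}
    (hC : IsPreconnected C) (h𝓗 : ∀ H ∈ 𝓗, IsPreconnected H)
    (hmeet : ∀ H ∈ 𝓗, (H ∩ C).Nonempty) : IsPreconnected (C ∪ ⋃₀ 𝓗) := by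
  rcases C.eq_empty_or_nonempty with rfl | ⟨x, hx⟩
  · have h𝓗_empty : 𝓗 = ∅ :=
      eq_empty_of_forall_notMem fun H hH ↦ by simpa using hmeet H hH
    simpa [h𝓗_empty] using hC
  refine isPreconnected_of_forall x fun y hy ↦ ?_
  rcases hy with hyC | ⟨H, hH, hyH⟩
  · exact ⟨C, subset_union_left, hx, hyC, hC⟩
  · obtain ⟨z, hzH, hzC⟩ := hmeet H hH
    exact ⟨C ∪ H, union_subset_union_right C (subset_sUnion_of_mem hH), Or.inl hx, Or.inr hyH,
      hC.union z hzC hzH (h𝓗 H hH)⟩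

end Topology

section ConvexHull

variable {E : Type*} [AddCommGroup E] [Module ℝ E] [TopologicalSpace E]

theorem exists_convexHull_union_sUnion_subset_convexHull_connectedComponentIn
    {𝓗 : Set (Set E)} (h𝓗 : ∀ H ∈ 𝓗, IsPreconnected H) {S C D : Set E}
    (hSC : S ⊆ C) (hC : IsConnected C) (hCD : C ⊆ D) (h𝓗D : ⋃₀ 𝓗 ⊆ D) :
    ∃ x ∈ D, convexHull ℝ (S ∪ ⋃₀ {H | H ∈ 𝓗 ∧ (H ∩ S).Nonempty}) ⊆
      convexHull ℝ (connectedComponentIn D x) := by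
  obtain ⟨x, hxC⟩ := hC.nonempty
  set 𝓗S := {H | H ∈ 𝓗 ∧ (H ∩ S).Nonempty}
  have h𝓗S : 𝓗S ⊆ 𝓗 := fun H hH ↦ hH.1
  have hpre : IsPreconnected (C ∪ ⋃₀ 𝓗S) :=
    hC.isPreconnected.union_sUnion_of_forall_inter_nonempty (fun H hH ↦ h𝓗 H (h𝓗S hH))
      fun H hH ↦ hH.2.mono (inter_subset_inter_right H hSC)
  have hsub : C ∪ ⋃₀ 𝓗S ⊆ connectedComponentIn D x :=
    hpre.subset_connectedComponentIn (Or.inl hxC)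
      (union_subset hCD ((sUnion_mono h𝓗S).trans h𝓗D))
  exact ⟨x, hCD hxC, convexHull_mono ((union_subset_union_left _ hSC).trans hsub)⟩

theorem subset_biUnion_convexHull_connectedComponentIn (D : Set E) :
    D ⊆ ⋃ x ∈ D, convexHull ℝ (connectedComponentIn D x) :=
  fun _ hx ↦ mem_biUnion hx (subset_convexHull ℝ _ (mem_connectedComponentIn hx))

theorem convexHull_connectedComponentIn_subset_biUnion {D : Set E} {x : E} (hx : x ∈ D) :
    convexHull ℝ (connectedComponentIn D x) ⊆
      ⋃ y ∈ D, convexHull ℝ (connectedComponentIn D y) :=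
  subset_biUnion_of_mem (u := fun y ↦ convexHull ℝ (connectedComponentIn D y)) hx

variable [IsTopologicalAddGroup E] [ContinuousSMul ℝ E]

theorem isConnected_convexHull_connectedComponentIn {D : Set E} {x : E} (hx : x ∈ D) :
    IsConnected (convexHull ℝ (connectedComponentIn D x)) :=
  (convex_convexHull ℝ _).isConnected (connectedComponentIn_nonempty_iff.mpr hx).convexHull

end ConvexHull

theorem growth_subset_defect_general
    {d : ℕ} (𝓗 : Set (Set (EuclideanSpace ℝ (Fin d))))
    (hconn : ∀ H ∈ 𝓗, IsConnected H)
    (H₀ : Set (EuclideanSpace ℝ (Fin d))) (hH₀ : H₀ ∈ 𝓗)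
    (D : ℕ → Set (EuclideanSpace ℝ (Fin d)))
    (hD0 : D 0 = ⋃₀ 𝓗)
    (hDsucc : ∀ j, D (j + 1) =
      ⋃ x ∈ D j, convexHull ℝ (connectedComponentIn (D j) x))
    (G : ℕ → Set (EuclideanSpace ℝ (Fin d)))
    (hG0 : G 0 = H₀)
    (hGsucc : ∀ k, G (k + 1) =
      convexHull ℝ (G k ∪ ⋃₀ {H | H ∈ 𝓗 ∧ (H ∩ G k).Nonempty})) :
    ∀ k : ℕ, 1 ≤ k → ∃ x ∈ D (k - 1),
      G k ⊆ convexHull ℝ (connectedComponentIn (D (k - 1)) x) := by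
  have hpre : ∀ H ∈ 𝓗, IsPreconnected H := fun H hH ↦ (hconn H hH).isPreconnected
  have hD_mono : Monotone D := monotone_nat_of_le_succ fun j ↦
    hDsucc j ▸ subset_biUnion_convexHull_connectedComponentIn (D j)
  have h𝓗D : ∀ j, ⋃₀ 𝓗 ⊆ D j := fun j ↦ hD0 ▸ hD_mono (Nat.zero_le j)
  have key : ∀ k, ∃ x ∈ D k, G (k + 1) ⊆ convexHull ℝ (connectedComponentIn (D k) x) := by
    intro k
    induction k with
    | zero =>
      rw [hGsucc, hG0]
      exact exists_convexHull_union_sUnion_subset_convexHull_connectedComponentIn hpre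
        subset_rfl (hconn H₀ hH₀) ((subset_sUnion_of_mem hH₀).trans (h𝓗D 0)) (h𝓗D 0)
    | succ k ih =>
      obtain ⟨x, hx, hGx⟩ := ih
      rw [hGsucc]
      exact exists_convexHull_union_sUnion_subset_convexHull_connectedComponentIn hpre hGx
        (isConnected_convexHull_connectedComponentIn hx)
        (hDsucc k ▸ convexHull_connectedComponentIn_subset_biUnion hx)
        (h𝓗D (k + 1))
  rintro (_ | k) hk
  · omega
  · exact key k

/-- Proposition 3.6: the iterated convex-hull process `G k` started from a single hole
`H₀` is contained in a single defect of `k`-th generation, i.e. in the convex hull of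
one connected component of the union `D (k-1)` of defects of `(k-1)`-th generation. -/
theorem growth_subset_defect
    {d : ℕ} (𝓗 : Set (Set (EuclideanSpace ℝ (Fin d))))
    (hne : ∀ H ∈ 𝓗, H.Nonempty)
    (hconn : ∀ H ∈ 𝓗, IsConnected H)
    (H₀ : Set (EuclideanSpace ℝ (Fin d))) (hH₀ : H₀ ∈ 𝓗)
    (D : ℕ → Set (EuclideanSpace ℝ (Fin d)))
    (hD0 : D 0 = ⋃₀ 𝓗)
    (hDsucc : ∀ j, D (j + 1) =
      ⋃ x ∈ D j, convexHull ℝ (connectedComponentIn (D j) x))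
    (G : ℕ → Set (EuclideanSpace ℝ (Fin d)))
    (hG0 : G 0 = H₀)
    (hGsucc : ∀ k, G (k + 1) =
      convexHull ℝ (G k ∪ ⋃₀ {H | H ∈ 𝓗 ∧ (H ∩ G k).Nonempty})) :
    ∀ k : ℕ, 1 ≤ k → ∃ x ∈ D (k - 1),
      G k ⊆ convexHull ℝ (connectedComponentIn (D (k - 1)) x) :=
  growth_subset_defect_general 𝓗 hconn H₀ hH₀ D hD0 hDsucc G hG0 hGsucc
end

section
/- There exists a real number K ≥ 1 such that for every real k ≥ K the following holds. Set α = 1/√(k+3) and M = ⌈2π√(k+3)⌉. Let S ⊆ ℂ be a set containing the closed disk of radius k+1 centered at 0, and let P ⊆ ℂ be a set of points such that for every integer i with 0 ≤ i < M there exists p ∈ P whose modulus satisfies k + 3/2 ≤ |p| ≤ k + 2 and whose argument lies (mod 2π) in the interval (αi, α(i+1)]. Then the closed disk of radius k+2 centered at 0 is contained in the convex hull of S ∪ ⋃_{p ∈ P} (closed unit disk centered at p). -/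
/-!
Only the origin and the outer points `(‖p‖ + 1) e^{iψ}` of the unit disks are needed. The sectors
have width `α` and cover a full turn, so consecutive directions of holes are at most `2α` apart and
every direction `θ` lies between two of them, `ψa ≤ θ ≤ ψb`. The triangle spanned by the origin and
the two outer points, of moduli at least `k + 5/2`, contains the point of direction `θ` and modulus
`(k + 5/2) cos ((ψb - ψa) / 2) ≥ (k + 5/2) (1 - α² / 2)`, which is at least `k + 2` because
`(2k + 5)² = 4 (k + 2) (k + 3) + 1`.
-/

open Real Complex Set

theorem exists_mem_segment_eq_zero {E : Type*} [AddCommGroup E] [Module ℝ E] [TopologicalSpace E]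
    [IsTopologicalAddGroup E] [ContinuousSMul ℝ E] {f : E → ℝ} (hf : Continuous f) {a b : E}
    (ha : f a ≤ 0) (hb : 0 ≤ f b) : ∃ w ∈ segment ℝ a b, f w = 0 :=
  (convex_segment a b).isPreconnected.intermediate_value (left_mem_segment ℝ a b)
    (right_mem_segment ℝ a b) hf.continuousOn ⟨ha, hb⟩

theorem exists_lt_lt_le_succ_of_lt_of_le {α : Type*} [LinearOrder α] (f : ℕ → α) {x : α} {n : ℕ}
    (h0 : f 0 < x) (hn : x ≤ f n) : ∃ i < n, f i < x ∧ x ≤ f (i + 1) := by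
  induction n with
  | zero => exact absurd hn h0.not_ge
  | succ n ih =>
    by_cases hx : x ≤ f n
    · obtain ⟨i, hi, h⟩ := ih hx
      exact ⟨i, by omega, h⟩
    · exact ⟨n, n.lt_succ_self, not_le.1 hx, hn⟩

theorem Function.Periodic.exists_bracket_of_sectors {A : Set ℝ} {T α : ℝ}
    (hA : Function.Periodic (· ∈ A) T) (hT : 0 < T) {n : ℕ} (hn : T ≤ α * n)
    (hsec : ∀ i < n, ∃ ψ ∈ A, ψ ∈ Ioc (α * i) (α * (i + 1))) (x : ℝ) :
    ∃ a ∈ A, ∃ b ∈ A, a ≤ x ∧ x ≤ b ∧ b - a ≤ 2 * α := by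
  choose! φ hφA hφ using hsec
  obtain ⟨m, rfl⟩ : ∃ m, n = m + 1 :=
    Nat.exists_eq_succ_of_ne_zero (by rintro rfl; simp at hn; linarith)
  -- The chain `φ 0 < φ 1 < ⋯ < φ m`, closed up by `φ 0 + T`, brackets the representative `y` of `x`.
  set y := toIocMod hT (φ 0) x
  have hy : y ∈ Ioc (φ 0) (φ 0 + T) := toIocMod_mem_Ioc hT (φ 0) x
  have hxy : x = y + toIocDiv hT (φ 0) x • T := (toIocMod_add_toIocDiv_zsmul hT _ _).symm
  suffices ∃ a ∈ A, ∃ b ∈ A, a ≤ y ∧ y ≤ b ∧ b - a ≤ 2 * α by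
    obtain ⟨a, ha, b, hb, hay, hyb, hab⟩ := this
    set j := toIocDiv hT (φ 0) x
    exact ⟨a + j • T, (hA.zsmul j a).mpr ha, b + j • T, (hA.zsmul j b).mpr hb,
      by linarith, by linarith, by linarith⟩
  have hgap : ∀ i < m, φ (i + 1) - φ i ≤ 2 * α := fun i hi => by
    have h := hφ i (by omega)
    have h' := hφ (i + 1) (by omega)
    push_cast at h h'
    linarith [h.1, h'.2]
  by_cases hym : y ≤ φ m
  · obtain ⟨i, hi, hlt, hle⟩ := exists_lt_lt_le_succ_of_lt_of_le φ hy.1 hym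
    exact ⟨φ i, hφA i (by omega), φ (i + 1), hφA _ (by omega), hlt.le, hle, hgap i hi⟩
  · have h0 := hφ 0 (by omega)
    have hm := hφ m (by omega)
    push_cast at h0 hm hn
    exact ⟨φ m, hφA m (by omega), φ 0 + T, (hA (φ 0)).mpr (hφA 0 (by omega)), (not_le.1 hym).le,
      hy.2, by linarith [h0.2, hm.1]⟩

theorem ofReal_mul_exp_mul_exp_neg (ρ ψ θ : ℝ) :
    (ρ : ℂ) * exp (ψ * I) * exp (-(θ * I)) = ρ * exp ((ψ - θ : ℝ) * I) := by
  rw [mul_assoc, ← Complex.exp_add]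
  push_cast
  ring_nf

theorem re_ofReal_mul_exp_mul_exp_neg (ρ ψ θ : ℝ) :
    ((ρ : ℂ) * exp (ψ * I) * exp (-(θ * I))).re = ρ * Real.cos (ψ - θ) := by
  rw [ofReal_mul_exp_mul_exp_neg, re_ofReal_mul, exp_ofReal_mul_I_re]

theorem im_ofReal_mul_exp_mul_exp_neg (ρ ψ θ : ℝ) :
    ((ρ : ℂ) * exp (ψ * I) * exp (-(θ * I))).im = ρ * Real.sin (ψ - θ) := by
  rw [ofReal_mul_exp_mul_exp_neg, im_ofReal_mul, exp_ofReal_mul_I_im]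

theorem eq_re_mul_exp_of_im_mul_exp_neg_eq_zero {w : ℂ} {θ : ℝ}
    (h : (w * exp (-(θ * I))).im = 0) : w = (w * exp (-(θ * I))).re * exp (θ * I) := by
  have hreal : ((w * exp (-(θ * I))).re : ℂ) = w * exp (-(θ * I)) :=
    Complex.ext (by simp) (by simpa using h.symm)
  rw [hreal, mul_assoc, ← Complex.exp_add, neg_add_cancel, Complex.exp_zero, mul_one]

theorem Convex.ofReal_mul_exp_mem {C : Set ℂ} (hC : Convex ℝ C) (h0 : (0 : ℂ) ∈ C)
    {ρa ρb ψa ψb θ r : ℝ} (ha : (ρa : ℂ) * exp (ψa * I) ∈ C) (hb : (ρb : ℂ) * exp (ψb * I) ∈ C)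
    (hψa : ψa ≤ θ) (hψb : θ ≤ ψb) (hgap : ψb - ψa < π) (hr : 0 ≤ r)
    (hra : r ≤ ρa * Real.cos ((ψb - ψa) / 2)) (hrb : r ≤ ρb * Real.cos ((ψb - ψa) / 2)) :
    (r : ℂ) * exp (θ * I) ∈ C := by
  rcases hr.eq_or_lt with rfl | hr
  · simpa using h0
  have hcos : 0 < Real.cos ((ψb - ψa) / 2) :=
    cos_pos_of_mem_Ioo ⟨by linarith [pi_pos], by linarith⟩
  have hρa : 0 < ρa := pos_of_mul_pos_left (hr.trans_le hra) hcos.le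
  have hρb : 0 < ρb := pos_of_mul_pos_left (hr.trans_le hrb) hcos.le
  -- `w` is where the segment crosses the line of direction `θ`; projecting `w` onto the bisector
  -- direction `μ` shows that it lies at distance at least `r` on the correct side of the origin.
  obtain ⟨w, hw, hwθ⟩ := exists_mem_segment_eq_zero (f := fun x => (x * exp (-(θ * I))).im)
    (a := ρa * exp (ψa * I)) (b := ρb * exp (ψb * I)) (by fun_prop)
    (by
      rw [im_ofReal_mul_exp_mul_exp_neg]
      nlinarith [sin_nonpos_of_nonpos_of_neg_pi_le (x := ψa - θ) (by linarith) (by linarith)])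
    (by
      rw [im_ofReal_mul_exp_mul_exp_neg]
      nlinarith [sin_nonneg_of_nonneg_of_le_pi (x := ψb - θ) (by linarith) (by linarith)])
  set R := (w * exp (-(θ * I))).re
  have hwR : w = R * exp (θ * I) := eq_re_mul_exp_of_im_mul_exp_neg_eq_zero hwθ
  set μ := (ψa + ψb) / 2 with hμ
  have hlin : IsLinearMap ℝ fun x : ℂ => (x * exp (-(μ * I))).re :=
    (reLm.comp (LinearMap.mulRight ℝ (exp (-(μ * I))))).isLinear
  have hproj : r ≤ (w * exp (-(μ * I))).re := by
    refine (convex_halfSpace_ge hlin r).segment_subset ?_ ?_ hw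
    · show r ≤ ((ρa : ℂ) * exp (ψa * I) * exp (-(μ * I))).re
      rw [re_ofReal_mul_exp_mul_exp_neg, show ψa - μ = -((ψb - ψa) / 2) by ring, Real.cos_neg]
      exact hra
    · show r ≤ ((ρb : ℂ) * exp (ψb * I) * exp (-(μ * I))).re
      rw [re_ofReal_mul_exp_mul_exp_neg, show ψb - μ = (ψb - ψa) / 2 by ring]
      exact hrb
  rw [hwR, re_ofReal_mul_exp_mul_exp_neg] at hproj
  have hcosθ : 0 ≤ Real.cos (θ - μ) :=
    cos_nonneg_of_neg_pi_div_two_le_of_le (by linarith) (by linarith)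
  have hR : 0 < R := pos_of_mul_pos_left (hr.trans_le hproj) hcosθ
  have hrR : r ≤ R := hproj.trans (mul_le_of_le_one_right hR.le (cos_le_one _))
  have hmem := hC.smul_mem_of_zero_mem h0 (hC.segment_subset ha hb hw)
    ⟨div_nonneg hr.le hR.le, (div_le_one hR).2 hrR⟩
  rwa [hwR, real_smul, ← mul_assoc, ← ofReal_mul, div_mul_cancel₀ r hR.ne'] at hmem

theorem add_two_le_mul_cos {k ρ δ : ℝ} (hk : 0 ≤ k + 2) (hρ : k + 5 / 2 ≤ ρ)
    (hδ : |δ| ≤ 1 / √(k + 3)) : k + 2 ≤ ρ * Real.cos δ := by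
  have hk3 : 0 < k + 3 := by linarith
  have hδ2 : δ ^ 2 * (k + 3) ≤ 1 := by
    rw [le_div_iff₀ (sqrt_pos.2 hk3)] at hδ
    have h := pow_le_one₀ (n := 2) (by positivity) hδ
    rwa [mul_pow, sq_abs, sq_sqrt hk3.le] at h
  have hcos : k + 2 ≤ (k + 5 / 2) * Real.cos δ := by
    nlinarith [one_sub_sq_div_two_le_cos (x := δ)]
  have hcos0 : 0 ≤ Real.cos δ := nonneg_of_mul_nonneg_right (hk.trans hcos) (by linarith)
  exact hcos.trans (mul_le_mul_of_nonneg_right hρ hcos0)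

theorem le_one_div_mul_toNat_ceil_mul {x c : ℝ} (hx : 0 ≤ x) (hc : 0 < c) :
    x ≤ 1 / c * ⌈x * c⌉.toNat := by
  have hceil : ((⌈x * c⌉.toNat : ℕ) : ℝ) = ⌈x * c⌉ := by
    exact_mod_cast Int.toNat_of_nonneg (Int.ceil_nonneg (by positivity))
  rw [hceil, one_div_mul_eq_div, le_div_iff₀ hc]
  exact Int.le_ceil _

theorem ofReal_add_one_mul_exp_mem_closedBall {p : ℂ} {ψ : ℝ} (hp : p = ‖p‖ * exp (ψ * I)) :
    ((‖p‖ + 1 : ℝ) : ℂ) * exp (ψ * I) ∈ Metric.closedBall p 1 := by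
  have hsub : ((‖p‖ + 1 : ℝ) : ℂ) * exp (ψ * I) - p = exp (ψ * I) := by
    nth_rw 2 [hp]; push_cast; ring
  rw [Metric.mem_closedBall, Complex.dist_eq, hsub, norm_exp_ofReal_mul_I]

/-- Deterministic covering step in the proof of Proposition 3.7: for all large `k`,
if `S` contains the closed disk of radius `k+1` about the origin and each of the
`M = ⌈2π√(k+3)⌉` angular sectors of width `α = 1/√(k+3)` of the ring
`{k + 3/2 ≤ |z| ≤ k + 2}` contains a point of `P`, then the convex hull of `S`
together with the unit disks centered at the points of `P` contains the closed disk
of radius `k+2`. -/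
theorem covering_step :
    ∃ K : ℝ, 1 ≤ K ∧ ∀ k : ℝ, K ≤ k → ∀ S P : Set ℂ,
      Metric.closedBall (0 : ℂ) (k + 1) ⊆ S →
      (∀ i : ℤ, 0 ≤ i → i < ⌈2 * Real.pi * Real.sqrt (k + 3)⌉ →
        ∃ p ∈ P, k + 3 / 2 ≤ ‖p‖ ∧ ‖p‖ ≤ k + 2 ∧
          ∃ θ ∈ Set.Ioc ((1 / Real.sqrt (k + 3)) * (i : ℝ))
              ((1 / Real.sqrt (k + 3)) * ((i : ℝ) + 1)),
            p = ((‖p‖ : ℝ) : ℂ) * Complex.exp (θ * Complex.I)) →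
      Metric.closedBall (0 : ℂ) (k + 2) ⊆
        convexHull ℝ (S ∪ ⋃ p ∈ P, Metric.closedBall p 1) := by
  refine ⟨1, le_rfl, fun k hk S P hS hP z hz => ?_⟩
  set α := 1 / √(k + 3)
  have hα : α ≤ 1 / 2 := one_div_le_one_div_of_le two_pos (le_sqrt_of_sq_le (by linarith))
  set A : Set ℝ := {ψ | ∃ p ∈ P, k + 3 / 2 ≤ ‖p‖ ∧ p = ‖p‖ * exp (ψ * I)}
  have hA : Function.Periodic (· ∈ A) (2 * π) := fun ψ => by
    simp only [A, mem_ofPred_eq, ofReal_add, ofReal_mul, ofReal_ofNat, exp_mul_I_periodic (ψ : ℂ)]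
  obtain ⟨ψa, ⟨pa, hpa, hpa1, hpa2⟩, ψb, ⟨pb, hpb, hpb1, hpb2⟩, hza, hzb, hab⟩ :=
    hA.exists_bracket_of_sectors two_pi_pos
      (le_one_div_mul_toNat_ceil_mul (c := √(k + 3)) two_pi_pos.le (sqrt_pos.2 (by linarith)))
      (fun i hi => by
        obtain ⟨p, hp, hp1, -, ψ, hψ, hp2⟩ := hP i (Int.natCast_nonneg i) (Int.lt_toNat.1 hi)
        exact ⟨ψ, ⟨p, hp, hp1, hp2⟩, by simpa only [Int.cast_natCast] using hψ⟩) z.arg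
  have hmem : ∀ p ∈ P, ∀ ψ : ℝ, p = ‖p‖ * exp (ψ * I) →
      ((‖p‖ + 1 : ℝ) : ℂ) * exp (ψ * I) ∈ convexHull ℝ (S ∪ ⋃ p ∈ P, Metric.closedBall p 1) :=
    fun p hp ψ hpψ => subset_convexHull ℝ _
      (Or.inr (mem_biUnion hp (ofReal_add_one_mul_exp_mem_closedBall hpψ)))
  have h0 : (0 : ℂ) ∈ convexHull ℝ (S ∪ ⋃ p ∈ P, Metric.closedBall p 1) :=
    subset_convexHull ℝ _ (Or.inl (hS (Metric.mem_closedBall_self (by linarith))))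
  have hδ : |(ψb - ψa) / 2| ≤ α := abs_le.2 ⟨by linarith, by linarith⟩
  have hzk : ‖z‖ ≤ k + 2 := by simpa using hz
  rw [← norm_mul_exp_arg_mul_I z]
  exact (convex_convexHull ℝ _).ofReal_mul_exp_mem h0 (hmem pa hpa ψa hpa2) (hmem pb hpb ψb hpb2)
    hza hzb (by linarith [pi_gt_three]) (norm_nonneg z)
    (hzk.trans (add_two_le_mul_cos (by linarith) (by linarith) hδ))
    (hzk.trans (add_two_le_mul_cos (by linarith) (by linarith) hδ))
end

section
/- Let b and c be nonzero vectors in ℝ², let θ be a real number with 0 ≤ θ ≤ π/2, and suppose the angle between b and c is at most 2θ. Then every point p on the segment [b, c] satisfies ‖p‖ ≥ min(‖b‖, ‖c‖) · cos θ. -/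
/-!
Write `p = s • b + t • c` with `s + t = 1` and `k = cos θ`. Since the angle between `b` and `c`
is at most `2θ ≤ π`, `⟪b, c⟫ ≥ cos 2θ ‖b‖‖c‖ = (2k² - 1)‖b‖‖c‖`, and expanding `‖p‖²` gives
`‖p‖² ≥ (1 - k²)(s‖b‖ - t‖c‖)² + k²(s‖b‖ + t‖c‖)² ≥ k² min(‖b‖, ‖c‖)²`.
-/

open InnerProductGeometry Real RealInnerProductSpace

variable {E : Type*} [NormedAddCommGroup E] [InnerProductSpace ℝ E]

theorem cos_mul_norm_mul_norm_le_inner_of_angle_le {b c : E} {φ : ℝ}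
    (hφ : φ ≤ π) (h : angle b c ≤ φ) : cos φ * (‖b‖ * ‖c‖) ≤ ⟪b, c⟫ := by
  rw [← cos_angle_mul_norm_mul_norm]
  gcongr
  exact cos_le_cos_of_nonneg_of_le_pi (angle_nonneg b c) hφ h

theorem sq_mul_sq_le_norm_smul_add_smul_sq {b c : E} {k s t : ℝ} (hk : k ^ 2 ≤ 1)
    (hs : 0 ≤ s) (ht : 0 ≤ t) (h : (2 * k ^ 2 - 1) * (‖b‖ * ‖c‖) ≤ ⟪b, c⟫) :
    k ^ 2 * (s * ‖b‖ + t * ‖c‖) ^ 2 ≤ ‖s • b + t • c‖ ^ 2 := by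
  have hexpand : ‖s • b + t • c‖ ^ 2 =
      s ^ 2 * ‖b‖ ^ 2 + 2 * (s * t) * ⟪b, c⟫ + t ^ 2 * ‖c‖ ^ 2 := by
    rw [norm_add_sq_real, norm_smul, norm_smul, real_inner_smul_left, real_inner_smul_right,
      Real.norm_of_nonneg hs, Real.norm_of_nonneg ht]
    ring
  rw [hexpand]
  nlinarith [mul_le_mul_of_nonneg_left h (mul_nonneg hs ht),
    mul_nonneg (sub_nonneg.mpr hk) (sq_nonneg (s * ‖b‖ - t * ‖c‖))]

theorem norm_segment_ge_of_angle_le_general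
    (b c : EuclideanSpace ℝ (Fin 2))
    (θ : ℝ) (hθ1 : θ ≤ Real.pi / 2)
    (hangle : InnerProductGeometry.angle b c ≤ 2 * θ) :
    ∀ p ∈ segment ℝ b c, min ‖b‖ ‖c‖ * Real.cos θ ≤ ‖p‖ := by
  rintro p ⟨s, t, hs, ht, hst, rfl⟩
  have hinner : (2 * cos θ ^ 2 - 1) * (‖b‖ * ‖c‖) ≤ ⟪b, c⟫ := by
    simpa only [cos_two_mul] using
      cos_mul_norm_mul_norm_le_inner_of_angle_le (by linarith) hangle
  have hmin : min ‖b‖ ‖c‖ ≤ s * ‖b‖ + t * ‖c‖ := Convex.min_le_combo _ _ hs ht hst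
  have hmin_nonneg : 0 ≤ min ‖b‖ ‖c‖ := le_min (norm_nonneg b) (norm_nonneg c)
  refine le_of_sq_le_sq ?_ (norm_nonneg _)
  calc (min ‖b‖ ‖c‖ * cos θ) ^ 2 = cos θ ^ 2 * min ‖b‖ ‖c‖ ^ 2 := by ring
    _ ≤ cos θ ^ 2 * (s * ‖b‖ + t * ‖c‖) ^ 2 := by gcongr
    _ ≤ ‖s • b + t • c‖ ^ 2 :=
      sq_mul_sq_le_norm_smul_add_smul_sq (cos_sq_le_one θ) hs ht hinner

/-- Key estimate in the proof of Proposition 3.7: if the angle between the nonzero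
vectors `b` and `c` is at most `2θ` with `0 ≤ θ ≤ π/2`, then every point of the
segment `[b, c]` has norm at least `min ‖b‖ ‖c‖ · cos θ`. -/
theorem norm_segment_ge_of_angle_le
    (b c : EuclideanSpace ℝ (Fin 2)) (hb : b ≠ 0) (hc : c ≠ 0)
    (θ : ℝ) (hθ0 : 0 ≤ θ) (hθ1 : θ ≤ Real.pi / 2)
    (hangle : InnerProductGeometry.angle b c ≤ 2 * θ) :
    ∀ p ∈ segment ℝ b c, min ‖b‖ ‖c‖ * Real.cos θ ≤ ‖p‖ :=
  norm_segment_ge_of_angle_le_general b c θ hθ1 hangle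
end

section
/- Let b and c be vectors in ℝ², let s, t ≥ 0 be real numbers, and set a = s • b + t • c. Suppose that ‖a‖ ≤ ‖p‖ for every point p of the segment [b, c]. Then a lies in the convex hull of {0, b, c}. -/
/-!
Writing `s • b + t • c = (s + t) • p` with `p ∈ [b, c]`, the hypothesis at `p` itself gives
`(s + t) ‖p‖ ≤ ‖p‖`, so either `s + t ≤ 1` or `p = 0`; in both cases `a` lies on the segment
`[0, p]`, which is contained in the triangle.
-/

theorem exists_mem_segment_smul_eq_smul_add_smul {𝕜 E : Type*} [Field 𝕜] [LinearOrder 𝕜]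
    [IsStrictOrderedRing 𝕜] [AddCommGroup E] [Module 𝕜 E] {s t : 𝕜} (hs : 0 ≤ s) (ht : 0 ≤ t)
    (b c : E) : ∃ p ∈ segment 𝕜 b c, (s + t) • p = s • b + t • c := by
  rcases (add_nonneg hs ht).eq_or_lt with hst | hst
  · obtain ⟨rfl, rfl⟩ : s = 0 ∧ t = 0 := ⟨by linarith, by linarith⟩
    exact ⟨b, left_mem_segment 𝕜 b c, by simp⟩
  · refine ⟨(s / (s + t)) • b + (t / (s + t)) • c,
      mem_segment_iff_div.2 ⟨s, t, hs, ht, hst, rfl⟩, ?_⟩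
    rw [smul_add, smul_smul, smul_smul, mul_div_cancel₀ _ hst.ne', mul_div_cancel₀ _ hst.ne']

theorem smul_mem_segment_zero_of_norm_smul_le {E : Type*} [NormedAddCommGroup E]
    [NormedSpace ℝ E] {r : ℝ} {p : E} (hr : 0 ≤ r) (h : ‖r • p‖ ≤ ‖p‖) :
    r • p ∈ segment ℝ 0 p := by
  rcases eq_or_ne p 0 with rfl | hp
  · simp
  have hr1 : r ≤ 1 := by
    rw [norm_smul, Real.norm_of_nonneg hr] at h
    exact le_of_mul_le_mul_right (by rwa [one_mul]) (norm_pos_iff.2 hp)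
  exact ⟨1 - r, r, sub_nonneg.2 hr1, hr, sub_add_cancel 1 r, by simp⟩

/-- Membership step in the proof of Proposition 3.7: a point of the cone spanned by
`b` and `c` whose norm does not exceed the norm of every point of the segment
`[b, c]` lies in the triangle with vertices `0`, `b`, `c`. -/
theorem mem_triangle_of_norm_le
    (b c : EuclideanSpace ℝ (Fin 2)) (s t : ℝ) (hs : 0 ≤ s) (ht : 0 ≤ t)
    (a : EuclideanSpace ℝ (Fin 2)) (ha : a = s • b + t • c)
    (hle : ∀ p ∈ segment ℝ b c, ‖a‖ ≤ ‖p‖) :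
    a ∈ convexHull ℝ ({0, b, c} : Set (EuclideanSpace ℝ (Fin 2))) := by
  obtain ⟨p, hp, hap⟩ := exists_mem_segment_smul_eq_smul_add_smul hs ht b c
  obtain rfl : a = (s + t) • p := ha.trans hap.symm
  have hp_hull : p ∈ convexHull ℝ ({0, b, c} : Set (EuclideanSpace ℝ (Fin 2))) :=
    segment_subset_convexHull (by simp) (by simp) hp
  exact (convex_convexHull ℝ _).segment_subset (subset_convexHull ℝ _ (by simp)) hp_hull
    (smul_mem_segment_zero_of_norm_smul_le (add_nonneg hs ht) (hle p hp))
end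

section
/- There exists a natural number k₀ ≥ 1 such that the following holds. For each integer k set α(k) = 1/√(k+3) and M(k) = ⌈2π√(k+3)⌉. Let P ⊆ ℂ be a set of points such that for every integer k ≥ k₀ and every integer i with 0 ≤ i < M(k) there exists p ∈ P with k + 3/2 ≤ |p| ≤ k + 2 and with argument lying (mod 2π) in (α(k)·i, α(k)·(i+1)]. Define G : ℕ → Set ℂ by G(k₀) = closed disk of radius k₀+1 centered at 0, and G(k+1) = convexHull ℝ ( G(k) ∪ ⋃ { closed unit disk centered at p : p ∈ P, the closed unit disk centered at p meets G(k) } ). Then for every k ≥ k₀ the closed disk of radius k+1 centered at 0 is contained in G(k); in particular ⋃_{k ≥ k₀} G(k) = ℂ. -/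
/-!
Induction on `k`, the hypothesis being `closedBall 0 (k + 1) ⊆ G k`. Every hole centred in the
ring `k + 3/2 ≤ ‖p‖ ≤ k + 2` then meets `G k`, so its unit disk lies in `G (k + 1)`. For a
direction `E = exp (θ I)`, the sector condition provides two such centres `p`, `q` on either side
of the ray through `E`, at angular distance at most `2 / √(k + 3)`. The chord `[p, q]` crosses the
ray at distance at least `(k + 3/2) cos (1 / √(k + 3)) ≥ k + 1`, so the translated chord
`[p + E, q + E] ⊆ G (k + 1)` crosses it at distance at least `k + 2`; by convexity and
`0 ∈ G (k + 1)`, the radius of length `k + 2` in direction `E` lies in `G (k + 1)`.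
-/

open Complex Metric Set
open scoped Real

theorem exists_le_lt_succ_of_le_of_lt {α : Type*} [LinearOrder α] {u : ℕ → α} {a : α} {N : ℕ}
    (h0 : u 0 ≤ a) (hN : a < u N) : ∃ j < N, u j ≤ a ∧ a < u (j + 1) := by
  induction N with
  | zero => exact absurd hN (not_lt.2 h0)
  | succ N ih =>
    by_cases h : a < u N
    · obtain ⟨j, hj, hja⟩ := ih h
      exact ⟨j, by omega, hja⟩
    · exact ⟨N, N.lt_succ_self, not_lt.1 h, hN⟩

theorem Complex.exists_ofReal_mem_segment {a b : ℂ} (ha : a.im ≤ 0) (hb : 0 ≤ b.im) :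
    ∃ x : ℝ, (x : ℂ) ∈ segment ℝ a b := by
  obtain ⟨w, hw, hw0⟩ := (convex_segment a b).isPreconnected.intermediate_value
    (left_mem_segment ℝ a b) (right_mem_segment ℝ a b) continuous_im.continuousOn ⟨ha, hb⟩
  exact ⟨w.re, by rwa [show (w.re : ℂ) = w from Complex.ext rfl (by simpa using hw0.symm)]⟩

theorem Complex.re_ofReal_mul_exp_mul_exp (r a b : ℝ) :
    ((r : ℂ) * exp (a * I) * exp (b * I)).re = r * Real.cos (a + b) := by
  rw [mul_assoc, ← exp_add, ← add_mul, ← ofReal_add, re_ofReal_mul, exp_ofReal_mul_I_re]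

theorem exists_ofReal_mem_segment_ge_mul_cos {ρ r₁ r₂ δ₁ δ₂ γ : ℝ} (hρ : 0 ≤ ρ) (h₁ : ρ ≤ r₁)
    (h₂ : ρ ≤ r₂) (hδ₁ : 0 ≤ δ₁) (hδ₂ : 0 ≤ δ₂) (hδ : δ₁ + δ₂ ≤ 2 * γ) (hγ : γ < π / 2) :
    ∃ x : ℝ, ρ * Real.cos γ ≤ x ∧
      (x : ℂ) ∈ segment ℝ (r₁ * exp (↑(-δ₁) * I)) (r₂ * exp (δ₂ * I)) := by
  have hδ₁π : δ₁ ≤ π := by linarith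
  have hδ₂π : δ₂ ≤ π := by linarith
  have hcosγ : 0 ≤ Real.cos γ := Real.cos_nonneg_of_mem_Icc ⟨by linarith, hγ.le⟩
  obtain ⟨x, hx⟩ := exists_ofReal_mem_segment (a := r₁ * exp (↑(-δ₁) * I))
    (b := r₂ * exp (δ₂ * I))
    (by
      rw [im_ofReal_mul, exp_ofReal_mul_I_im, Real.sin_neg]
      nlinarith [Real.sin_nonneg_of_nonneg_of_le_pi hδ₁ hδ₁π])
    (by
      rw [im_ofReal_mul, exp_ofReal_mul_I_im]
      nlinarith [Real.sin_nonneg_of_nonneg_of_le_pi hδ₂ hδ₂π])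
  -- test the segment against the direction bisecting the two endpoints
  set β := (δ₂ - δ₁) / 2 with hβ
  have hcos_endpoint : ∀ r, ρ ≤ r → ρ * Real.cos γ ≤ r * Real.cos ((δ₁ + δ₂) / 2) := by
    intro r hr
    calc ρ * Real.cos γ ≤ r * Real.cos γ := mul_le_mul_of_nonneg_right hr hcosγ
      _ ≤ r * Real.cos ((δ₁ + δ₂) / 2) := by
        gcongr
        · linarith
        · exact Real.cos_le_cos_of_nonneg_of_le_pi (by linarith) (by linarith) (by linarith)
  have hhalf : Convex ℝ {w : ℂ | ρ * Real.cos γ ≤ (w * exp (↑(-β) * I)).re} :=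
    convex_halfSpace_ge ⟨fun v w => by simp [add_mul], fun c w => by simp [mul_assoc]⟩ _
  have ha : ρ * Real.cos γ ≤ (r₁ * exp (↑(-δ₁) * I) * exp (↑(-β) * I)).re := by
    rw [re_ofReal_mul_exp_mul_exp, show -δ₁ + -β = -((δ₁ + δ₂) / 2) by ring, Real.cos_neg]
    exact hcos_endpoint r₁ h₁
  have hb : ρ * Real.cos γ ≤ (r₂ * exp (δ₂ * I) * exp (↑(-β) * I)).re := by
    rw [re_ofReal_mul_exp_mul_exp, show δ₂ + -β = (δ₁ + δ₂) / 2 by ring]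
    exact hcos_endpoint r₂ h₂
  have hx_half : ρ * Real.cos γ ≤ (x * exp (↑(-β) * I)).re := hhalf.segment_subset ha hb hx
  rw [re_ofReal_mul, exp_ofReal_mul_I_re, Real.cos_neg] at hx_half
  have hcosβ : 0 < Real.cos β := Real.cos_pos_of_mem_Ioo ⟨by linarith, by linarith⟩
  refine ⟨x, ?_, hx⟩
  nlinarith [Real.cos_le_one β, mul_nonneg hρ hcosγ]

theorem exists_pair_bracketing_angle {S : Set ℂ} {α : ℝ} {M : ℕ} (hM : 2 * π ≤ M * α)
    (hS : ∀ i < M, ∃ p ∈ S, ∃ φ ∈ Ioc (α * i) (α * (i + 1)), p = ‖p‖ * exp (φ * I)) (θ : ℝ) :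
    ∃ p ∈ S, ∃ q ∈ S, ∃ δ₁ δ₂ : ℝ, 0 ≤ δ₁ ∧ 0 ≤ δ₂ ∧ δ₁ + δ₂ ≤ 2 * α ∧
      p = exp (θ * I) * (‖p‖ * exp (↑(-δ₁) * I)) ∧ q = exp (θ * I) * (‖q‖ * exp (δ₂ * I)) := by
  have hM0 : 0 < M := by
    rcases M.eq_zero_or_pos with rfl | h
    · simp only [CharP.cast_eq_zero, zero_mul] at hM
      linarith [Real.pi_pos]
    · exact h
  choose! p hpS φ hφ hpφ using hS
  -- the sampled angles, with the first one repeated one turn later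
  let u : ℕ → ℝ := fun j => if j < M then φ j else φ 0 + 2 * π
  let v : ℕ → ℂ := fun j => if j < M then p j else p 0
  have hv : ∀ j ≤ M, v j ∈ S ∧ v j = ‖v j‖ * exp (u j * I) := by
    intro j hj
    rcases hj.lt_or_eq with hj | rfl
    · simp only [u, v, hj, if_true]
      exact ⟨hpS j hj, hpφ j hj⟩
    · simp only [u, v, lt_irrefl, if_false, ofReal_add, ofReal_mul, ofReal_ofNat]
      have hturn : exp ((φ 0 + 2 * π) * I) = exp (φ 0 * I) := exp_mul_I_periodic _
      exact ⟨hpS 0 hM0, hturn ▸ hpφ 0 hM0⟩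
  have hgap : ∀ j < M, u (j + 1) ≤ u j + 2 * α := by
    intro j hj
    have hφj := (hφ j hj).1
    rcases (Nat.succ_le_of_lt hj).lt_or_eq with h | h
    · have hφj' := (hφ (j + 1) h).2
      simp only [u, h, hj, if_true]
      push_cast at hφj'
      linarith
    · have hφ0 := (hφ 0 hM0).2
      subst h
      simp only [u, hj, lt_irrefl, if_true, if_false]
      push_cast at hM hφ0
      linarith
  set θ' := toIcoMod Real.two_pi_pos (φ 0) θ
  have hθ' : θ' ∈ Ico (φ 0) (φ 0 + 2 * π) := toIcoMod_mem_Ico _ _ _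
  have hEθ : exp (θ' * I) = exp (θ * I) := by
    simp only [θ', toIcoMod, ofReal_sub, ofReal_zsmul, ofReal_mul, ofReal_ofNat]
    exact exp_mul_I_periodic.sub_zsmul_eq _
  obtain ⟨j, hj, hjθ, hθj⟩ := exists_le_lt_succ_of_le_of_lt (u := u) (N := M)
    (by simpa [u, hM0] using hθ'.1) (by simpa [u] using hθ'.2)
  refine ⟨v j, (hv j hj.le).1, v (j + 1), (hv (j + 1) hj).1, θ' - u j, u (j + 1) - θ',
    by linarith, by linarith, by linarith [hgap j hj], ?_, ?_⟩
  · rw [← hEθ, mul_left_comm, ← exp_add, ← add_mul, ← ofReal_add,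
      show θ' + -(θ' - u j) = u j by ring]
    exact (hv j hj.le).2
  · rw [← hEθ, mul_left_comm, ← exp_add, ← add_mul, ← ofReal_add,
      show θ' + (u (j + 1) - θ') = u (j + 1) by ring]
    exact (hv (j + 1) hj).2

theorem add_one_le_mul_cos_inv_sqrt {k : ℝ} (hk : 0 ≤ k) :
    k + 1 ≤ (k + 3 / 2) * Real.cos (1 / √(k + 3)) := by
  have hcos := Real.one_sub_sq_div_two_le_cos (x := 1 / √(k + 3))
  rw [div_pow, Real.sq_sqrt (by linarith), one_pow] at hcos
  have hk₃ : 0 < k + 3 := by linarith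
  calc k + 1 ≤ k + 1 + 3 / (4 * (k + 3)) := le_add_of_nonneg_right (by positivity)
    _ = (k + 3 / 2) * (1 - 1 / (k + 3) / 2) := by field_simp; ring
    _ ≤ (k + 3 / 2) * Real.cos (1 / √(k + 3)) := by gcongr

def OccupiesRingSectors (P : Set ℂ) (k : ℕ) : Prop :=
  ∀ i : ℤ, 0 ≤ i → i < ⌈2 * π * √((k : ℝ) + 3)⌉ →
    ∃ p ∈ P, (k : ℝ) + 3 / 2 ≤ ‖p‖ ∧ ‖p‖ ≤ (k : ℝ) + 2 ∧
      ∃ θ ∈ Ioc (1 / √((k : ℝ) + 3) * i) (1 / √((k : ℝ) + 3) * (i + 1)),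
        p = ‖p‖ * exp (θ * I)

def growthStep (P G : Set ℂ) : Set ℂ :=
  convexHull ℝ (G ∪ ⋃ p ∈ {p ∈ P | (closedBall p 1 ∩ G).Nonempty}, closedBall p 1)

theorem OccupiesRingSectors.exists_mem_ring_of_lt {P : Set ℂ} {k : ℕ}
    (hP : OccupiesRingSectors P k) (i : ℕ) (hi : i < ⌈2 * π * √((k : ℝ) + 3)⌉₊) :
    ∃ p ∈ {p ∈ P | k + 3 / 2 ≤ ‖p‖ ∧ ‖p‖ ≤ k + 2},
      ∃ φ ∈ Ioc (1 / √((k : ℝ) + 3) * i) (1 / √((k : ℝ) + 3) * (i + 1)),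
        p = ‖p‖ * exp (φ * I) := by
  obtain ⟨p, hp, hp₁, hp₂, φ, hφ, hpφ⟩ := hP i (by positivity)
    (by rw [← Int.natCast_ceil_eq_ceil (by positivity)]; exact Int.ofNat_lt.2 hi)
  rw [Int.cast_natCast] at hφ
  exact ⟨p, ⟨hp, hp₁, hp₂⟩, φ, hφ, hpφ⟩

theorem closedBall_one_subset_of_norm_le {P G : Set ℂ} {R : ℝ} (hR : 0 ≤ R)
    (hG : closedBall 0 R ⊆ G) {p : ℂ} (hp : p ∈ P) (hpR : ‖p‖ ≤ R + 1) :
    closedBall p 1 ⊆ G ∪ ⋃ p ∈ {p ∈ P | (closedBall p 1 ∩ G).Nonempty}, closedBall p 1 := by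
  have hmeet : (closedBall p 1 ∩ closedBall 0 R).Nonempty := by
    rw [← not_disjoint_iff_nonempty_inter, disjoint_closedBall_closedBall_iff zero_le_one hR,
      dist_zero_right]
    linarith
  exact subset_union_right.trans' <| subset_biUnion_of_mem (u := fun p => closedBall p 1)
    ⟨hp, hmeet.mono (inter_subset_inter_right _ hG)⟩

theorem convex_growthStep (P G : Set ℂ) : Convex ℝ (growthStep P G) :=
  convex_convexHull ℝ _

theorem closedBall_subset_growthStep {P G : Set ℂ} {k : ℕ} (hP : OccupiesRingSectors P k)
    (hG : closedBall (0 : ℂ) (k + 1) ⊆ G) : closedBall (0 : ℂ) (k + 2) ⊆ growthStep P G := by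
  set t := √((k : ℝ) + 3)
  have ht : 1 ≤ t := Real.one_le_sqrt.2 (by linarith)
  have hM : 2 * π ≤ ⌈2 * π * t⌉₊ * (1 / t) := by
    rw [mul_one_div, le_div_iff₀ (by positivity)]
    exact Nat.le_ceil _
  have h₀ : (0 : ℂ) ∈ growthStep P G :=
    subset_convexHull ℝ _ (Or.inl (hG (mem_closedBall_self (by positivity))))
  intro z hz
  obtain ⟨p, ⟨hpP, hp₁, hp₂⟩, q, ⟨hqP, hq₁, hq₂⟩, δ₁, δ₂, hδ₁, hδ₂, hδ, hpE, hqE⟩ :=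
    exists_pair_bracketing_angle hM hP.exists_mem_ring_of_lt (arg z)
  set E := exp (arg z * I)
  have hE : ‖E‖ = 1 := norm_exp_ofReal_mul_I _
  obtain ⟨x, hx, a, b, ha, hb, hab, hxab⟩ := exists_ofReal_mem_segment_ge_mul_cos
    (by positivity) hp₁ hq₁ hδ₁ hδ₂ hδ
    (by rw [one_div]; linarith [inv_le_one_of_one_le₀ ht, Real.pi_gt_three])
  have hkx : k + 1 ≤ x := (add_one_le_mul_cos_inv_sqrt k.cast_nonneg).trans hx
  have hfar : E * (x + 1) ∈ growthStep P G := by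
    have hpE' := closedBall_one_subset_of_norm_le (by positivity) hG hpP (by linarith)
      (show p + E ∈ closedBall p 1 by simp [hE])
    have hqE' := closedBall_one_subset_of_norm_le (by positivity) hG hqP (by linarith)
      (show q + E ∈ closedBall q 1 by simp [hE])
    convert convex_growthStep P G (subset_convexHull ℝ _ hpE') (subset_convexHull ℝ _ hqE')
      ha hb hab using 1
    have hab' : (a : ℂ) + b = 1 := by exact_mod_cast hab
    simp only [real_smul] at hxab ⊢
    linear_combination -(a : ℂ) * hpE - (b : ℂ) * hqE - E * hxab - E * hab'
  have hx₁ : 0 < x + 1 := by linarith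
  have hzx : ‖z‖ ≤ x + 1 := by
    rw [mem_closedBall_zero_iff] at hz
    linarith
  rw [show z = ‖z‖ * E from (norm_mul_exp_arg_mul_I z).symm]
  convert (convex_growthStep P G).smul_mem_of_zero_mem h₀ hfar
    ⟨div_nonneg (norm_nonneg z) hx₁.le, div_le_one_of_le₀ hzx hx₁.le⟩ using 1
  have hx₁' : (x : ℂ) + 1 ≠ 0 := by exact_mod_cast hx₁.ne'
  rw [real_smul, ofReal_div, ofReal_add, ofReal_one]
  field_simp

/-- Deterministic content of Proposition 3.7: there is a starting scale `k₀ ≥ 1` such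
that if, for every `k ≥ k₀`, each of the `M(k) = ⌈2π√(k+3)⌉` angular sectors of width
`α(k) = 1/√(k+3)` of the ring `{k + 3/2 ≤ |z| ≤ k + 2}` contains a point of `P`, then
the iterated convex-hull process `G` starting from the closed disk of radius `k₀ + 1`
and adjoining at each step all unit disks centered at points of `P` that meet the
current set satisfies `closedBall 0 (k+1) ⊆ G k` for every `k ≥ k₀`; in particular
the sets `G k`, `k ≥ k₀`, cover the whole plane. -/
theorem growth_covers_plane :
    ∃ k₀ : ℕ, 1 ≤ k₀ ∧ ∀ P : Set ℂ,
      (∀ k : ℕ, k₀ ≤ k → ∀ i : ℤ, 0 ≤ i → i < ⌈2 * Real.pi * Real.sqrt ((k : ℝ) + 3)⌉ →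
        ∃ p ∈ P, (k : ℝ) + 3 / 2 ≤ ‖p‖ ∧ ‖p‖ ≤ (k : ℝ) + 2 ∧
          ∃ θ ∈ Set.Ioc ((1 / Real.sqrt ((k : ℝ) + 3)) * (i : ℝ))
              ((1 / Real.sqrt ((k : ℝ) + 3)) * ((i : ℝ) + 1)),
            p = (‖p‖ : ℂ) * Complex.exp (θ * Complex.I)) →
      ∀ G : ℕ → Set ℂ,
        G k₀ = Metric.closedBall (0 : ℂ) ((k₀ : ℝ) + 1) →
        (∀ k : ℕ, k₀ ≤ k → G (k + 1) = convexHull ℝ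
          (G k ∪ ⋃ p ∈ {p ∈ P | (Metric.closedBall p 1 ∩ G k).Nonempty},
            Metric.closedBall p 1)) →
        (∀ k : ℕ, k₀ ≤ k → Metric.closedBall (0 : ℂ) ((k : ℝ) + 1) ⊆ G k) ∧
          ⋃ k ∈ {k : ℕ | k₀ ≤ k}, G k = Set.univ := by
  refine ⟨1, le_rfl, fun P hP G hG₀ hG => ?_⟩
  have hball : ∀ k : ℕ, 1 ≤ k → closedBall (0 : ℂ) ((k : ℝ) + 1) ⊆ G k := by
    intro k hk
    induction k, hk using Nat.le_induction with
    | base => rw [hG₀]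
    | succ k hk ih =>
      rw [hG k hk, Nat.cast_succ, add_assoc, one_add_one_eq_two]
      exact closedBall_subset_growthStep (hP k hk) ih
  refine ⟨hball, eq_univ_of_forall fun z => mem_biUnion (x := ⌈‖z‖⌉₊ + 1) (by simp) ?_⟩
  refine hball _ (by simp) (mem_closedBall_zero_iff.2 ?_)
  push_cast
  linarith [Nat.le_ceil ‖z‖]
end

section
/- Consider the eight closed cones in ℝ² obtained from A = {(x, y) : x ≥ 0 and 0 ≤ y ≤ x} by the symmetries of the square (i.e., by swapping coordinates and changing signs of coordinates); these eight cones cover ℝ². Let C ⊆ ℤ², viewed as a subset of ℝ², be such that C has infinitely many points in each of these eight cones. Then the convex hull of C is all of ℝ². -/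
/-- The cone `A = {(x, y) : 0 ≤ x ∧ 0 ≤ y ∧ y ≤ x}` in the plane. -/
def coneA : Set (ℝ × ℝ) := {p | 0 ≤ p.1 ∧ 0 ≤ p.2 ∧ p.2 ≤ p.1}

/-- The eight symmetries of the square acting on the plane:
sign changes of the coordinates and the coordinate swap. -/
def squareSym : Fin 8 → (ℝ × ℝ) → (ℝ × ℝ) :=
  ![fun p => (p.1, p.2), fun p => (p.2, p.1),
    fun p => (-p.1, p.2), fun p => (-p.2, p.1),
    fun p => (p.1, -p.2), fun p => (p.2, -p.1),
    fun p => (-p.1, -p.2), fun p => (-p.2, -p.1)]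

/-- The eight closed cones obtained from `coneA` by the symmetries of the square. -/
def cone (i : Fin 8) : Set (ℝ × ℝ) := squareSym i '' coneA


lemma cones_cover : (⋃ i : Fin 8, cone i) = Set.univ := by
  ext p
  simp only [Set.mem_iUnion, Set.mem_univ, iff_true]
  rcases le_total 0 p.1 with hx | hx <;> rcases le_total 0 p.2 with hy | hy
  · rcases le_total p.2 p.1 with h | h
    · exact ⟨0, p, ⟨hx, hy, h⟩, rfl⟩
    · exact ⟨1, (p.2, p.1), ⟨hy, hx, h⟩, rfl⟩
  · rcases le_total (-p.2) p.1 with h | h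
    · exact ⟨4, (p.1, -p.2), ⟨hx, neg_nonneg.2 hy, h⟩,
        show ((p.1, -(-p.2)) : ℝ × ℝ) = p by rw [neg_neg]⟩
    · exact ⟨5, (-p.2, p.1), ⟨neg_nonneg.2 hy, hx, h⟩,
        show ((p.1, -(-p.2)) : ℝ × ℝ) = p by rw [neg_neg]⟩
  · rcases le_total p.2 (-p.1) with h | h
    · exact ⟨2, (-p.1, p.2), ⟨neg_nonneg.2 hx, hy, h⟩,
        show ((-(-p.1), p.2) : ℝ × ℝ) = p by rw [neg_neg]⟩
    · exact ⟨3, (p.2, -p.1), ⟨hy, neg_nonneg.2 hx, h⟩,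
        show ((-(-p.1), p.2) : ℝ × ℝ) = p by rw [neg_neg]⟩
  · rcases le_total p.1 p.2 with h | h
    · exact ⟨6, (-p.1, -p.2), ⟨neg_nonneg.2 hx, neg_nonneg.2 hy, neg_le_neg h⟩,
        show ((-(-p.1), -(-p.2)) : ℝ × ℝ) = p by rw [neg_neg, neg_neg]⟩
    · exact ⟨7, (-p.2, -p.1), ⟨neg_nonneg.2 hy, neg_nonneg.2 hx, neg_le_neg h⟩,
        show ((-(-p.1), -(-p.2)) : ℝ × ℝ) = p by rw [neg_neg, neg_neg]⟩

lemma cone_inner (i : Fin 8) {d p : ℝ × ℝ} (hd : d ∈ cone i) (hp : p ∈ cone i) :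
    max |d.1| |d.2| * max |p.1| |p.2| ≤ d.1 * p.1 + d.2 * p.2 := by
  obtain ⟨q, ⟨hq1, hq2, hq3⟩, rfl⟩ := hd
  obtain ⟨r, ⟨hr1, hr2, hr3⟩, rfl⟩ := hp
  have base : max |q.1| |q.2| * max |r.1| |r.2| ≤ q.1 * r.1 + q.2 * r.2 := by
    rw [abs_of_nonneg hq1, abs_of_nonneg hq2, abs_of_nonneg hr1, abs_of_nonneg hr2,
        max_eq_left hq3, max_eq_left hr3]
    nlinarith [mul_nonneg hq2 hr2]
  fin_cases i
  · exact base
  · show max |q.2| |q.1| * max |r.2| |r.1| ≤ q.2 * r.2 + q.1 * r.1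
    rw [max_comm |q.2| |q.1|, max_comm |r.2| |r.1|]; linarith
  · show max |(-q.1)| |q.2| * max |(-r.1)| |r.2| ≤ -q.1 * -r.1 + q.2 * r.2
    simp only [abs_neg, neg_mul_neg]; linarith
  · show max |(-q.2)| |q.1| * max |(-r.2)| |r.1| ≤ -q.2 * -r.2 + q.1 * r.1
    simp only [abs_neg, neg_mul_neg]
    rw [max_comm |q.2| |q.1|, max_comm |r.2| |r.1|]; linarith
  · show max |q.1| |(-q.2)| * max |r.1| |(-r.2)| ≤ q.1 * r.1 + -q.2 * -r.2
    simp only [abs_neg, neg_mul_neg]; linarith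
  · show max |q.2| |(-q.1)| * max |r.2| |(-r.1)| ≤ q.2 * r.2 + -q.1 * -r.1
    simp only [abs_neg, neg_mul_neg]
    rw [max_comm |q.2| |q.1|, max_comm |r.2| |r.1|]; linarith
  · show max |(-q.1)| |(-q.2)| * max |(-r.1)| |(-r.2)| ≤ -q.1 * -r.1 + -q.2 * -r.2
    simp only [abs_neg, neg_mul_neg]; linarith
  · show max |(-q.2)| |(-q.1)| * max |(-r.2)| |(-r.1)| ≤ -q.2 * -r.2 + -q.1 * -r.1
    simp only [abs_neg, neg_mul_neg]
    rw [max_comm |q.2| |q.1|, max_comm |r.2| |r.1|]; linarith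

lemma exists_big {T : Set (ℤ × ℤ)} (hT : T.Infinite) (M : ℤ) :
    ∃ c ∈ T, M < |c.1| ∨ M < |c.2| := by
  by_contra h
  push_neg at h
  refine hT ((Set.finite_Icc ((-M, -M) : ℤ × ℤ) (M, M)).subset ?_)
  intro c hc
  obtain ⟨h1, h2⟩ := h c hc
  rw [abs_le] at h1 h2
  exact ⟨⟨h1.1, h2.1⟩, ⟨h1.2, h2.2⟩⟩

/-- The geometric core of Proposition 3.8: the eight cones obtained from `A` by the
symmetries of the square cover the plane, and any subset of `ℤ²` having infinitely
many points in each of the eight cones has convex hull equal to all of `ℝ²`. -/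
theorem convexHull_eq_univ_of_infinite_in_cones :
    (⋃ i : Fin 8, cone i) = Set.univ ∧
    ∀ C : Set (ℤ × ℤ),
      (∀ i : Fin 8, {c ∈ C | (((c.1 : ℝ), (c.2 : ℝ)) : ℝ × ℝ) ∈ cone i}.Infinite) →
      convexHull ℝ ((fun c : ℤ × ℤ => (((c.1 : ℝ), (c.2 : ℝ)) : ℝ × ℝ)) '' C) =
        Set.univ := by
  refine ⟨cones_cover, ?_⟩
  intro C hC
  set S : Set (ℝ × ℝ) := (fun c : ℤ × ℤ => (((c.1 : ℝ), (c.2 : ℝ)) : ℝ × ℝ)) '' C with hSdef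
  have hconv : Convex ℝ (convexHull ℝ S) := convex_convexHull ℝ S
  have hSsub : ∀ c : ℤ × ℤ, c ∈ C → (((c.1 : ℝ), (c.2 : ℝ)) : ℝ × ℝ) ∈ convexHull ℝ S :=
    fun c hc => subset_convexHull ℝ S ⟨c, hc, rfl⟩
  have hSne : S.Nonempty := by
    obtain ⟨c, hc⟩ := (hC 0).nonempty
    exact ⟨_, c, hc.1, rfl⟩
  have hclos : closure (convexHull ℝ S) = Set.univ := by
    by_contra hne
    obtain ⟨t, ht⟩ := (Set.ne_univ_iff_exists_notMem _).1 hne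
    obtain ⟨f, u, hfu, hut⟩ := geometric_hahn_banach_closed_point
      hconv.closure isClosed_closure ht
    set a := f (1, 0) with ha
    set b := f (0, 1) with hb
    have hfp : ∀ p : ℝ × ℝ, f p = a * p.1 + b * p.2 := by
      intro p
      have hp : p = p.1 • ((1 : ℝ), (0 : ℝ)) + p.2 • ((0 : ℝ), (1 : ℝ)) := by
        simp [Prod.ext_iff]
      calc f p = f (p.1 • ((1 : ℝ), (0 : ℝ)) + p.2 • ((0 : ℝ), (1 : ℝ))) := by rw [← hp]
        _ = a * p.1 + b * p.2 := by
            rw [map_add, map_smul, map_smul, smul_eq_mul, smul_eq_mul, ← ha, ← hb]; ring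
    have hK : 0 < max |a| |b| := by
      rcases eq_or_ne a 0 with ha0 | ha0
      · rcases eq_or_ne b 0 with hb0 | hb0
        · exfalso
          obtain ⟨s0, hs0⟩ := hSne
          have h1 := hfu s0 (subset_closure (subset_convexHull ℝ S hs0))
          have h2 : f s0 = 0 := by rw [hfp, ha0, hb0]; ring
          have h3 : f t = 0 := by rw [hfp, ha0, hb0]; ring
          rw [h2] at h1; rw [h3] at hut; linarith
        · exact lt_max_of_lt_right (abs_pos.2 hb0)
      · exact lt_max_of_lt_left (abs_pos.2 ha0)
    obtain ⟨i, hi⟩ : ∃ i : Fin 8, ((a, b) : ℝ × ℝ) ∈ cone i := by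
      have : ((a, b) : ℝ × ℝ) ∈ ⋃ i : Fin 8, cone i := by rw [cones_cover]; trivial
      exact Set.mem_iUnion.1 this
    set K := max |a| |b| with hKdef
    set M : ℤ := max 0 ⌈u / K⌉ with hM
    obtain ⟨c, hcC, hbig⟩ := exists_big (hC i) M
    have hcs : (((c.1 : ℝ), (c.2 : ℝ)) : ℝ × ℝ) ∈ cone i := hcC.2
    have hineq := cone_inner i hi hcs
    have hlt := hfu _ (subset_closure (hSsub c hcC.1))
    rw [hfp] at hlt
    have hMb : (M : ℝ) < max |(c.1 : ℝ)| |(c.2 : ℝ)| := by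
      rcases hbig with h | h
      · have : (M : ℝ) < |(c.1 : ℝ)| := by exact_mod_cast (by push_cast [Int.cast_abs]; exact_mod_cast h : (M:ℝ) < (|c.1| : ℤ))
        exact this.trans_le (le_max_left _ _)
      · have : (M : ℝ) < |(c.2 : ℝ)| := by exact_mod_cast (by push_cast [Int.cast_abs]; exact_mod_cast h : (M:ℝ) < (|c.2| : ℤ))
        exact this.trans_le (le_max_right _ _)
    have hu : u ≤ K * (M : ℝ) := by
      have h1 : u / K ≤ (M : ℝ) := by
        have : (⌈u / K⌉ : ℝ) ≤ (M : ℝ) := by exact_mod_cast le_max_right 0 ⌈u / K⌉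
        exact (Int.le_ceil _).trans this
      calc u = K * (u / K) := by field_simp
        _ ≤ K * (M : ℝ) := by nlinarith
    have : u < u := by
      calc u ≤ K * (M : ℝ) := hu
        _ < K * max |(c.1 : ℝ)| |(c.2 : ℝ)| := by exact (mul_lt_mul_iff_right₀ hK).2 hMb
        _ ≤ a * (c.1 : ℝ) + b * (c.2 : ℝ) := hineq
        _ < u := hlt
    exact lt_irrefl u this
  have hspan : affineSpan ℝ (convexHull ℝ S) = ⊤ := by
    rw [← AffineSubspace.coe_eq_univ_iff]
    apply Set.eq_univ_of_univ_subset
    rw [← hclos]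
    exact closure_minimal (subset_affineSpan ℝ _)
      (affineSpan ℝ (convexHull ℝ S)).closed_of_finiteDimensional
  obtain ⟨x, hx⟩ := hconv.interior_nonempty_iff_affineSpan_eq_top.2 hspan
  apply Set.eq_univ_of_forall
  intro t
  have hy : ((2 : ℝ) • t - x) ∈ closure (convexHull ℝ S) := by rw [hclos]; trivial
  have hmem := hconv.combo_interior_closure_mem_interior hx hy
    (a := 1/2) (b := 1/2) (by norm_num) (by norm_num) (by norm_num)
  have heq : (1/2 : ℝ) • x + (1/2 : ℝ) • ((2 : ℝ) • t - x) = t := by module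
  rw [heq] at hmem
  exact interior_subset hmem
end
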